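/- For every strict partition λ, q_1(λ) = |λ|; that is, Σ_{i=0}^{m} C(x_i,2) − Σ_{i=1}^{m} C(y_i,2) = |λ| (note C(x_0,2) = C(1,2) = 0). -/

import Mathlib

open scoped BigOperators

/-- A strict partition: a strictly decreasing list of positive integers. -/
structure StrictPartition where
  parts : List ℕ
  pos : ∀ p ∈ parts, 0 < p
  sorted : parts.Pairwise (· > ·)

namespace StrictPartition

/-- The `i`-th part (1-indexed); `0` for `i` beyond the length. -/
def part (lam : StrictPartition) (i : ℕ) : ℕ := lam.parts.getD (i - 1) 0

/-- The size `|λ|` of a strict partition. -/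
def size (lam : StrictPartition) : ℕ := lam.parts.sum

/-- The length `ℓ(λ)` (number of parts) of a strict partition. -/
def length (lam : StrictPartition) : ℕ := lam.parts.length

/-- The cells of the shifted Young diagram: row `i` occupies columns `i+1, …, i+λᵢ`. -/
def cells (lam : StrictPartition) : Finset (ℕ × ℕ) :=
  (Finset.range (lam.size + lam.length + 2) ×ˢ
      Finset.range (lam.size + lam.length + 2)).filter
    (fun b => 1 ≤ b.1 ∧ b.1 < b.2 ∧ b.2 ≤ b.1 + lam.part b.1)

/-- The content of a box `(i,j)` is `j - i`. -/
def content (b : ℕ × ℕ) : ℕ := b.2 - b.1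

/-- The hook length of a box `(i,j)`: the number of boxes strictly below it in its
column, plus the number strictly to its right in its row, plus `1`, plus `λ_j`. -/
def hook (lam : StrictPartition) (b : ℕ × ℕ) : ℕ :=
  (lam.cells.filter (fun b' => b'.2 = b.2 ∧ b.1 < b'.1)).card +
  (lam.cells.filter (fun b' => b'.1 = b.1 ∧ b.2 < b'.2)).card + 1 + lam.part b.2

/-- `H_λ`, the product of the hook lengths of all boxes of `λ`. -/
def H (lam : StrictPartition) : ℕ := ∏ b ∈ lam.cells, lam.hook b

/-- `μ ≤ λ` iff `μᵢ ≤ λᵢ` for all `i`. -/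
instance : LE StrictPartition := ⟨fun mu lam => ∀ i, mu.part i ≤ lam.part i⟩

/-- The cells of the skew shifted diagram `λ/μ`. -/
def skewCells (mu lam : StrictPartition) : Finset (ℕ × ℕ) := lam.cells \ mu.cells

/-- `f_{λ/μ}`: the number of standard shifted Young tableaux of skew shape `λ/μ`,
i.e. bijective fillings of the cells of `λ/μ` with `0, 1, …, n-1` increasing along
rows and columns. -/
noncomputable def fskew (mu lam : StrictPartition) : ℕ :=
  Nat.card {T : {b // b ∈ skewCells mu lam} → Fin (skewCells mu lam).card //
    Function.Bijective T ∧
    (∀ a b : {b // b ∈ skewCells mu lam},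
      (a : ℕ × ℕ).1 = (b : ℕ × ℕ).1 → (a : ℕ × ℕ).2 < (b : ℕ × ℕ).2 → T a < T b) ∧
    (∀ a b : {b // b ∈ skewCells mu lam},
      (a : ℕ × ℕ).2 = (b : ℕ × ℕ).2 → (a : ℕ × ℕ).1 < (b : ℕ × ℕ).1 → T a < T b)}

/-- The empty strict partition. -/
def empty : StrictPartition := ⟨[], by simp, List.Pairwise.nil⟩

/-- `f_λ`: the number of standard shifted Young tableaux of shape `λ`. -/
noncomputable def f (lam : StrictPartition) : ℕ := fskew empty lam

/-- `f'_{λ/μ} = 2^{|λ|-|μ|-ℓ(λ)+ℓ(μ)} f_{λ/μ}`. -/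
noncomputable def fPrime (mu lam : StrictPartition) : ℚ :=
  (2 : ℚ) ^ ((lam.size : ℤ) - mu.size - lam.length + mu.length) * fskew mu lam

/-- `λ⁺` is obtained from `λ` by adding one box. -/
def AddBox (lam lam' : StrictPartition) : Prop := lam ≤ lam' ∧ lam'.size = lam.size + 1

/-- The difference operator `D` for strict partitions. -/
noncomputable def D (g : StrictPartition → ℚ) (lam : StrictPartition) : ℚ :=
  (∑ᶠ nu ∈ {nu : StrictPartition | lam.AddBox nu ∧ lam.length < nu.length}, g nu) +
  2 * (∑ᶠ nu ∈ {nu : StrictPartition | lam.AddBox nu ∧ nu.length = lam.length}, g nu) -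
  g lam

/-- The boxes that can be removed from `λ` leaving (the diagram of) a strict
partition: the outer corners. -/
def removableCells (lam : StrictPartition) : Set (ℕ × ℕ) :=
  {b | b ∈ lam.cells ∧ ∃ mu : StrictPartition, mu.cells = lam.cells.erase b}

/-- The boxes that can be added to `λ` giving (the diagram of) a strict partition. -/
def addableCells (lam : StrictPartition) : Set (ℕ × ℕ) :=
  {b | b ∉ lam.cells ∧ ∃ mu : StrictPartition, mu.cells = insert b lam.cells}

/-- The contents `x_0 = 1 < x_1 < ⋯ < x_m` of the inner corners of `λ`. -/
def innerContents (lam : StrictPartition) : Set ℕ :=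
  insert 1 (content '' lam.addableCells)

/-- The contents `y_1 < ⋯ < y_m` of the outer corners of `λ`. -/
def outerContents (lam : StrictPartition) : Set ℕ :=
  content '' lam.removableCells

/-- `q_k(λ) = ∑_{i=0}^m C(xᵢ,2)^k − ∑_{i=1}^m C(yᵢ,2)^k`. -/
noncomputable def q (k : ℕ) (lam : StrictPartition) : ℚ :=
  (∑ᶠ c ∈ lam.innerContents, ((c.choose 2 : ℚ)) ^ k) -
  (∑ᶠ c ∈ lam.outerContents, ((c.choose 2 : ℚ)) ^ k)

/-- `q_ν(λ) = ∏_j q_{ν_j}(λ)` for a partition `ν` given as a multiset of parts. -/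
noncomputable def qPart (nu : Multiset ℕ) (lam : StrictPartition) : ℚ :=
  (nu.map (fun k => q k lam)).prod

end StrictPartition

/-! The parts of `λ` are the contents of the last boxes of its rows. Writing `S` for the set of
parts, a corner can be removed from a row of length `y` exactly when `y - 1 ∉ S`, and a box can be
added to a row of length `y > 0` exactly when `y + 1 ∉ S`; so the outer contents are `S \ (S + 1)`
and the inner contents are `(S + 1) \ S` together with `x_0 = 1`. Hence
`q_1(λ) = ∑_{S + 1} C(·, 2) - ∑_S C(·, 2) = ∑_{y ∈ S} (C(y + 1, 2) - C(y, 2)) = ∑_{y ∈ S} y`. -/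

theorem Finset.sum_choose_two_image_succ_sdiff_sub (S : Finset ℕ) :
    ∑ x ∈ S.image (· + 1) \ S, (x.choose 2 : ℚ) - ∑ y ∈ S \ S.image (· + 1), (y.choose 2 : ℚ) =
      ∑ y ∈ S, (y : ℚ) := by
  rw [Finset.sum_sdiff_sub_sum_sdiff, Finset.sum_image (fun a _ b _ h => Nat.succ_injective h),
    ← Finset.sum_sub_distrib]
  refine Finset.sum_congr rfl fun y _ => ?_
  rw [Nat.choose_succ_succ', Nat.choose_one_right]
  push_cast
  ring

namespace StrictPartition

variable {lam : StrictPartition} {i j : ℕ}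

-- `part 0 = part 1` by truncated subtraction, hence the hypotheses `1 ≤ i` throughout.

lemma part_mem (h : 0 < lam.part i) : lam.part i ∈ lam.parts := by
  rw [part] at *
  rcases lt_or_ge (i - 1) lam.parts.length with hl | hl
  · rw [List.getD_eq_getElem _ _ hl]; exact List.getElem_mem _
  · rw [List.getD_eq_default _ _ hl] at h; omega

lemma part_eq_zero_of_length_le (h : lam.length ≤ i - 1) : lam.part i = 0 :=
  List.getD_eq_default _ _ h

lemma lt_length_of_part_pos (h : 0 < lam.part i) : i - 1 < lam.length := by
  by_contra hl
  exact h.ne' (part_eq_zero_of_length_le (not_lt.1 hl))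

lemma exists_part_eq_of_mem {a : ℕ} (h : a ∈ lam.parts) : ∃ i, 1 ≤ i ∧ lam.part i = a := by
  obtain ⟨k, hk, rfl⟩ := List.getElem_of_mem h
  exact ⟨k + 1, by omega, List.getD_eq_getElem _ _ hk⟩

lemma part_lt_part (hi : 1 ≤ i) (hij : i < j) (hj : 0 < lam.part j) :
    lam.part j < lam.part i := by
  have hlj := lt_length_of_part_pos hj
  have hli : i - 1 < lam.parts.length := by rw [length] at hlj; omega
  rw [part, part, List.getD_eq_getElem _ _ hli, List.getD_eq_getElem _ _ hlj]
  exact List.pairwise_iff_getElem.1 lam.sorted _ _ hli hlj (by omega)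

lemma part_le_part (hi : 1 ≤ i) (hij : i ≤ j) : lam.part j ≤ lam.part i := by
  rcases Nat.eq_zero_or_pos (lam.part j) with h | h
  · omega
  · rcases hij.eq_or_lt with rfl | hij
    · rfl
    · exact (part_lt_part hi hij h).le

lemma mem_cells {b : ℕ × ℕ} :
    b ∈ lam.cells ↔ 1 ≤ b.1 ∧ b.1 < b.2 ∧ b.2 ≤ b.1 + lam.part b.1 := by
  simp only [cells, Finset.mem_filter, Finset.mem_product, Finset.mem_range]
  refine ⟨fun h => h.2, fun h => ⟨?_, h⟩⟩
  have hpos : 0 < lam.part b.1 := by omega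
  have hrow := lt_length_of_part_pos hpos
  have hsize : lam.part b.1 ≤ lam.size := List.le_sum_of_mem (part_mem hpos)
  omega

lemma exists_part_eq (g : ℕ → ℕ) (hzero : ∃ i, g (i + 1) = 0)
    (hg : ∀ i j, 1 ≤ i → i < j → 0 < g j → g j < g i) :
    ∃ mu : StrictPartition, ∀ i, 1 ≤ i → mu.part i = g i := by
  set n := Nat.find hzero
  have hpos : ∀ k < n, 0 < g (k + 1) := fun k hk => Nat.pos_of_ne_zero (Nat.find_min hzero hk)
  refine ⟨⟨(List.range n).map (fun k => g (k + 1)), ?_, ?_⟩, fun i hi => ?_⟩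
  · simp only [List.mem_map, List.mem_range]
    rintro _ ⟨k, hk, rfl⟩
    exact hpos k hk
  · refine List.pairwise_map.2 (List.pairwise_lt_range.imp_of_mem fun {a b} _ hb hab => ?_)
    exact hg _ _ (by omega) (by omega) (hpos b (List.mem_range.1 hb))
  · rw [part]
    rcases lt_or_ge (i - 1) n with hin | hin
    · rw [List.getD_eq_getElem _ _ (by simpa using hin)]
      simp only [List.getElem_map, List.getElem_range]
      congr 1; omega
    · rw [List.getD_eq_default _ _ (by simpa using hin)]
      have hn : g (n + 1) = 0 := Nat.find_spec hzero
      by_contra hgi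
      rcases (show n + 1 ≤ i by omega).eq_or_lt with rfl | hlt
      · exact hgi hn.symm
      · have := hg _ _ (by omega) hlt (by omega); omega

lemma exists_part_eq_ite {r z : ℕ} (hr : 1 ≤ r) (hlt : ∀ i, 1 ≤ i → i < r → z < lam.part i)
    (hgt : ∀ j, r < j → 0 < lam.part j → lam.part j < z) :
    ∃ mu : StrictPartition, ∀ i, 1 ≤ i → mu.part i = if i = r then z else lam.part i := by
  refine exists_part_eq _ ⟨r + lam.length, ?_⟩ fun i j hi hij hj => ?_
  · rw [if_neg (by omega), part_eq_zero_of_length_le (by omega)]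
  · by_cases hjr : j = r
    · rw [if_pos hjr, if_neg (by omega)]
      exact hlt i hi (by omega)
    · rw [if_neg hjr] at hj ⊢
      split_ifs with hir
      · exact hgt j (by omega) hj
      · exact part_lt_part hi hij hj

lemma cells_eq_erase_iff {mu : StrictPartition} {b : ℕ × ℕ} (hb : b ∈ lam.cells) :
    mu.cells = lam.cells.erase b ↔ b.2 = b.1 + lam.part b.1 ∧
      ∀ i, 1 ≤ i → mu.part i = if i = b.1 then lam.part b.1 - 1 else lam.part i := by
  have hb' := mem_cells.1 hb
  simp only [Finset.ext_iff, Finset.mem_erase, mem_cells, Prod.forall, ne_eq, Prod.ext_iff]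
  constructor
  · intro key
    have k1 := key b.1 (b.1 + lam.part b.1)
    have k2 := key b.1 b.2
    have k3 := key b.1 (b.1 + mu.part b.1)
    have k4 := key b.1 (b.1 + lam.part b.1 - 1)
    refine ⟨by omega, fun i hi => ?_⟩
    split_ifs with hib
    · subst hib; omega
    · have k5 := key i (i + lam.part i)
      have k6 := key i (i + mu.part i)
      omega
  · rintro ⟨hb2, hmu⟩ a c
    rcases Nat.lt_or_ge a 1 with ha | ha
    · omega
    · have := hmu a ha
      split_ifs at this with hab
      · subst hab; omega
      · omega

lemma cells_eq_insert_iff {mu : StrictPartition} {b : ℕ × ℕ} (hb : b ∉ lam.cells) :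
    mu.cells = insert b lam.cells ↔ 1 ≤ b.1 ∧ b.2 = b.1 + lam.part b.1 + 1 ∧
      ∀ i, 1 ≤ i → mu.part i = if i = b.1 then lam.part b.1 + 1 else lam.part i := by
  rw [mem_cells] at hb
  simp only [Finset.ext_iff, Finset.mem_insert, mem_cells, Prod.forall, Prod.ext_iff]
  constructor
  · intro key
    have k1 := key b.1 b.2
    have k2 := key b.1 (b.1 + mu.part b.1)
    have k3 := key b.1 (b.2 - 1)
    refine ⟨by omega, by omega, fun i hi => ?_⟩
    split_ifs with hib
    · subst hib; omega
    · have k5 := key i (i + lam.part i)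
      have k6 := key i (i + mu.part i)
      omega
  · rintro ⟨hb1, hb2, hmu⟩ a c
    rcases Nat.lt_or_ge a 1 with ha | ha
    · omega
    · have := hmu a ha
      split_ifs at this with hab
      · subst hab; omega
      · omega

lemma content_mem_parts_of_mem_removableCells {b : ℕ × ℕ} (hb : b ∈ lam.removableCells) :
    content b ∈ lam.parts ∧ content b - 1 ∉ lam.parts := by
  obtain ⟨hb, mu, hmu⟩ := hb
  obtain ⟨hb2, hmu⟩ := (cells_eq_erase_iff hb).1 hmu
  have hb' := mem_cells.1 hb
  have hcontent : content b = lam.part b.1 := by rw [content]; omega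
  rw [hcontent]
  refine ⟨part_mem (by omega), fun hmem => ?_⟩
  obtain ⟨j, hj, hjy⟩ := exists_part_eq_of_mem hmem
  have hjpos := lam.pos _ hmem
  have hrj : b.1 < j := by
    by_contra! hjr
    have := part_le_part (lam := lam) hj hjr
    omega
  have hnext := part_le_part (lam := lam) (i := b.1 + 1) (j := j) (by omega) hrj
  have hmu_next := hmu (b.1 + 1) (by omega)
  have hmu_r := hmu b.1 hb'.1
  rw [if_neg (by omega)] at hmu_next
  rw [if_pos rfl] at hmu_r
  have := part_lt_part (lam := mu) hb'.1 (by omega : b.1 < b.1 + 1) (by omega)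
  omega

lemma mem_removableCells_of_part {r : ℕ} (hr : 1 ≤ r) (hpos : 0 < lam.part r)
    (hprev : lam.part r - 1 ∉ lam.parts) : (r, r + lam.part r) ∈ lam.removableCells := by
  have hb : (r, r + lam.part r) ∈ lam.cells := mem_cells.2 (by dsimp only; omega)
  obtain ⟨mu, hmu⟩ := exists_part_eq_ite (lam := lam) (z := lam.part r - 1) hr
    (fun i hi hir => by have := part_lt_part hi hir hpos; omega)
    (fun j hrj hj => by
      have := part_lt_part hr hrj hj
      have : lam.part j ≠ lam.part r - 1 := fun h => hprev (h ▸ part_mem hj)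
      omega)
  exact ⟨hb, mu, (cells_eq_erase_iff hb).2 ⟨rfl, hmu⟩⟩

lemma content_mem_parts_of_mem_addableCells {b : ℕ × ℕ} (hb : b ∈ lam.addableCells) :
    content b = 1 ∨ content b - 1 ∈ lam.parts ∧ content b ∉ lam.parts := by
  obtain ⟨hb, mu, hmu⟩ := hb
  obtain ⟨hb1, hb2, hmu⟩ := (cells_eq_insert_iff hb).1 hmu
  have hcontent : content b = lam.part b.1 + 1 := by rw [content]; omega
  rw [hcontent]
  rcases Nat.eq_zero_or_pos (lam.part b.1) with h0 | hpos
  · exact Or.inl (by rw [h0])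
  refine Or.inr ⟨part_mem hpos, fun hmem => ?_⟩
  obtain ⟨j, hj, hjy⟩ := exists_part_eq_of_mem hmem
  have hjr : j < b.1 := by
    by_contra! hrj
    have := part_le_part (lam := lam) hb1 hrj
    omega
  have hprev := part_le_part (lam := lam) hj (Nat.le_sub_one_of_lt hjr)
  have hmu_prev := hmu (b.1 - 1) (by omega)
  have hmu_r := hmu b.1 hb1
  rw [if_neg (by omega)] at hmu_prev
  rw [if_pos rfl] at hmu_r
  have := part_lt_part (lam := mu) (by omega : 1 ≤ b.1 - 1) (by omega : b.1 - 1 < b.1) (by omega)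
  omega

lemma mem_addableCells_of_part {r : ℕ} (hr : 1 ≤ r) (hpos : 0 < lam.part r)
    (hnext : lam.part r + 1 ∉ lam.parts) : (r, r + lam.part r + 1) ∈ lam.addableCells := by
  have hb : (r, r + lam.part r + 1) ∉ lam.cells := by rw [mem_cells]; dsimp only; omega
  obtain ⟨mu, hmu⟩ := exists_part_eq_ite (lam := lam) (z := lam.part r + 1) hr
    (fun i hi hir => by
      have := part_lt_part hi hir hpos
      have : lam.part i ≠ lam.part r + 1 := fun h => hnext (h ▸ part_mem (by omega))
      omega)
    (fun j hrj hj => by have := part_lt_part hr hrj hj; omega)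
  exact ⟨hb, mu, (cells_eq_insert_iff hb).2 ⟨hr, rfl, hmu⟩⟩

lemma outerContents_eq :
    lam.outerContents = ↑(lam.parts.toFinset \ lam.parts.toFinset.image (· + 1)) := by
  ext y
  simp only [outerContents, Set.mem_image, Finset.coe_sdiff, Finset.coe_image,
    List.coe_toFinset, Set.mem_sdiff, Set.mem_ofPred_eq, not_exists, not_and]
  constructor
  · rintro ⟨b, hb, rfl⟩
    obtain ⟨hmem, hprev⟩ := content_mem_parts_of_mem_removableCells hb
    exact ⟨hmem, fun a ha hay => hprev (by rwa [← hay, Nat.add_sub_cancel])⟩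
  · rintro ⟨hmem, hprev⟩
    obtain ⟨r, hr, rfl⟩ := exists_part_eq_of_mem hmem
    have hpos := lam.pos _ hmem
    exact ⟨_, mem_removableCells_of_part hr hpos (fun h => hprev _ h (by omega)),
      by simp [content]⟩

lemma innerContents_eq :
    lam.innerContents = ↑(insert 1 (lam.parts.toFinset.image (· + 1) \ lam.parts.toFinset)) := by
  ext x
  simp only [innerContents, Set.mem_insert_iff, Set.mem_image, Finset.coe_insert,
    Finset.coe_sdiff, Finset.coe_image, List.coe_toFinset, Set.mem_sdiff, Set.mem_ofPred_eq]
  constructor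
  · rintro (rfl | ⟨b, hb, rfl⟩)
    · exact Or.inl rfl
    rcases content_mem_parts_of_mem_addableCells hb with h | ⟨hprev, hmem⟩
    · exact Or.inl h
    have := lam.pos _ hprev
    exact Or.inr ⟨⟨_, hprev, by omega⟩, hmem⟩
  · rintro (rfl | ⟨⟨a, ha, rfl⟩, hnext⟩)
    · exact Or.inl rfl
    obtain ⟨r, hr, rfl⟩ := exists_part_eq_of_mem ha
    exact Or.inr ⟨_, mem_addableCells_of_part hr (lam.pos _ ha) hnext, by simp [content]; omega⟩

end StrictPartition

open StrictPartition in
/-- Lemma 4.2. -/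
theorem statement18 (lam : StrictPartition) : q 1 lam = lam.size := by
  have hnodup : lam.parts.Nodup := lam.sorted.imp ne_of_gt
  rw [q, innerContents_eq, outerContents_eq, finsum_mem_coe_finset, finsum_mem_coe_finset,
    Finset.sum_insert_zero (by simp)]
  simp only [pow_one]
  rw [Finset.sum_choose_two_image_succ_sdiff_sub, size, Nat.cast_list_sum,
    List.sum_toFinset _ hnodup]
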